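/- Let φ, C̃, λ₁, λ₂, ρ > 0, s ≥ 1, and suppose a vector δ ∈ ℝ^m and matrix X (n rows) satisfy (i) C̃ n⁻¹‖Xδ‖₂² + (λ₁/2)‖δ‖₁ + λ₂‖δ‖₂² ≤ 2(λ₁√s + λ₂ρ)‖δ_S‖₂ and (ii) n^{−1/2}‖Xδ‖₂ ≥ (φ/2)‖δ_S‖₂. Then ‖δ_S‖₂ ≤ 8 C̃⁻¹ φ⁻² (λ₁√s + λ₂ρ), and consequently ‖δ‖₁ ≤ 32 C̃⁻¹ φ⁻² (λ₁√s + λ₂ρ)²/λ₁ and n^{−1/2}‖Xδ‖₂ ≤ 4 C̃⁻¹ φ⁻¹ (λ₁√s + λ₂ρ). -/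
import Mathlib


open Matrix

theorem stmt_12 {n m : ℕ} (hn : 0 < n) (X : Matrix (Fin n) (Fin m) ℝ)
    (δ : Fin m → ℝ) (S : Finset (Fin m))
    (φ Ct lam₁ lam₂ ρ s : ℝ)
    (hφ : 0 < φ) (hCt : 0 < Ct) (hlam₁ : 0 < lam₁) (hlam₂ : 0 < lam₂)
    (hρ : 0 < ρ) (hs : 1 ≤ s)
    (hi : Ct * (n : ℝ)⁻¹ * ∑ i, (X.mulVec δ i) ^ 2 +
        lam₁ / 2 * ∑ j, |δ j| + lam₂ * ∑ j, (δ j) ^ 2 ≤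
      2 * (lam₁ * Real.sqrt s + lam₂ * ρ) * Real.sqrt (∑ j ∈ S, (δ j) ^ 2))
    (hii : φ / 2 * Real.sqrt (∑ j ∈ S, (δ j) ^ 2) ≤
      (n : ℝ) ^ (-(1:ℝ)/2) * Real.sqrt (∑ i, (X.mulVec δ i) ^ 2)) :
    Real.sqrt (∑ j ∈ S, (δ j) ^ 2) ≤
        8 * Ct⁻¹ * φ⁻¹ ^ 2 * (lam₁ * Real.sqrt s + lam₂ * ρ) ∧
      (∑ j, |δ j|) ≤
        32 * Ct⁻¹ * φ⁻¹ ^ 2 * (lam₁ * Real.sqrt s + lam₂ * ρ) ^ 2 / lam₁ ∧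
      (n : ℝ) ^ (-(1:ℝ)/2) * Real.sqrt (∑ i, (X.mulVec δ i) ^ 2) ≤
        4 * Ct⁻¹ * φ⁻¹ * (lam₁ * Real.sqrt s + lam₂ * ρ) := by
  set Q : ℝ := ∑ i, (X.mulVec δ i) ^ 2 with hQdef
  set a : ℝ := Real.sqrt (∑ j ∈ S, (δ j) ^ 2) with hadef
  set K : ℝ := lam₁ * Real.sqrt s + lam₂ * ρ with hKdef
  have hn' : (0:ℝ) < (n:ℝ) := by exact_mod_cast hn
  have hQ : 0 ≤ Q := Finset.sum_nonneg fun i _ => sq_nonneg _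
  have ha : 0 ≤ a := Real.sqrt_nonneg _
  have hK : 0 < K := by
    have : (0:ℝ) < Real.sqrt s := Real.sqrt_pos.mpr (by linarith)
    positivity
  have hL1 : 0 ≤ ∑ j, |δ j| := Finset.sum_nonneg fun j _ => abs_nonneg _
  have hL2 : 0 ≤ ∑ j, (δ j) ^ 2 := Finset.sum_nonneg fun j _ => sq_nonneg _
  clear_value Q a K
  -- rewrite the rpow
  have hpow : ((n:ℝ)) ^ (-(1:ℝ)/2) = (Real.sqrt n)⁻¹ := by
    rw [show (-(1:ℝ)/2) = -(1/2) by norm_num, Real.rpow_neg hn'.le,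
      ← Real.sqrt_eq_rpow]
  rw [hpow] at hii ⊢
  -- squared version of (ii)
  have hsq : (φ/2)^2 * a^2 ≤ (n:ℝ)⁻¹ * Q := by
    have h1 : (φ/2 * a)^2 ≤ ((Real.sqrt n)⁻¹ * Real.sqrt Q)^2 := by
      apply pow_le_pow_left₀ (by positivity) hii
    calc (φ/2)^2 * a^2 = (φ/2 * a)^2 := by ring
      _ ≤ ((Real.sqrt n)⁻¹ * Real.sqrt Q)^2 := h1
      _ = ((Real.sqrt n)^2)⁻¹ * (Real.sqrt Q)^2 := by rw [mul_pow, inv_pow]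
      _ = (n:ℝ)⁻¹ * Q := by rw [Real.sq_sqrt hn'.le, Real.sq_sqrt hQ]
  -- from (i)
  have hA : Ct * ((n:ℝ)⁻¹ * Q) ≤ 2 * K * a := by
    have h2 : Ct * (n:ℝ)⁻¹ * Q ≤ 2 * K * a := by nlinarith
    linarith [h2, mul_assoc Ct ((n:ℝ)⁻¹) Q]
  have hquad : Ct * ((φ/2)^2 * a^2) ≤ 2 * K * a :=
    le_trans (by nlinarith) hA
  have key : Ct * φ^2 * a ≤ 8 * K := by
    rcases eq_or_lt_of_le ha with h0 | h0
    · rw [← h0]; nlinarith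
    · nlinarith
  have goal1 : a ≤ 8 * Ct⁻¹ * φ⁻¹^2 * K := by
    rw [show 8 * Ct⁻¹ * φ⁻¹^2 * K = 8 * K / (Ct * φ^2) by
      field_simp, le_div_iff₀ (by positivity)]
    calc a * (Ct * φ^2) = Ct * φ^2 * a := by ring
      _ ≤ 8 * K := key
  refine ⟨goal1, ?_, ?_⟩
  · rw [show 32 * Ct⁻¹ * φ⁻¹^2 * K^2 / lam₁ = 32 * K^2 / (Ct * φ^2 * lam₁) by
      field_simp, le_div_iff₀ (by positivity)]
    have h3 : lam₁ / 2 * ∑ j, |δ j| ≤ 2 * K * a := by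
      linarith [hi, mul_nonneg (mul_nonneg hCt.le (inv_nonneg.mpr hn'.le)) hQ,
        mul_nonneg hlam₂.le hL2]
    have h4 := mul_le_mul_of_nonneg_left h3 (by positivity : (0:ℝ) ≤ Ct * φ^2)
    have h5 := mul_le_mul_of_nonneg_left key (by positivity : (0:ℝ) ≤ 2 * K)
    calc (∑ j, |δ j|) * (Ct * φ^2 * lam₁)
        = 2 * (Ct * φ^2 * (lam₁ / 2 * ∑ j, |δ j|)) := by ring
      _ ≤ 2 * (Ct * φ^2 * (2 * K * a)) := by linarith
      _ = 2 * (2 * K * (Ct * φ^2 * a)) := by ring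
      _ ≤ 2 * (2 * K * (8 * K)) := by linarith
      _ = 32 * K^2 := by ring
  · have hx : (Real.sqrt n)⁻¹ * Real.sqrt Q = Real.sqrt ((n:ℝ)⁻¹ * Q) := by
      rw [Real.sqrt_mul (by positivity) Q, Real.sqrt_inv]
    have hq : (n:ℝ)⁻¹ * Q ≤ (4 * Ct⁻¹ * φ⁻¹ * K)^2 := by
      rw [show (4 * Ct⁻¹ * φ⁻¹ * K)^2 = 16 * K^2 / (Ct^2 * φ^2) by
        field_simp; ring, le_div_iff₀ (by positivity)]
      have h6 := mul_le_mul_of_nonneg_left hA (by positivity : (0:ℝ) ≤ Ct * φ^2)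
      have h5 := mul_le_mul_of_nonneg_left key (by positivity : (0:ℝ) ≤ 2 * K)
      calc (n:ℝ)⁻¹ * Q * (Ct^2 * φ^2)
          = Ct * φ^2 * (Ct * ((n:ℝ)⁻¹ * Q)) := by ring
        _ ≤ Ct * φ^2 * (2 * K * a) := h6
        _ = 2 * K * (Ct * φ^2 * a) := by ring
        _ ≤ 2 * K * (8 * K) := h5
        _ = 16 * K^2 := by ring
    rw [hx]
    calc Real.sqrt ((n:ℝ)⁻¹ * Q) ≤ Real.sqrt ((4 * Ct⁻¹ * φ⁻¹ * K)^2) :=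
          Real.sqrt_le_sqrt hq
      _ = 4 * Ct⁻¹ * φ⁻¹ * K := Real.sqrt_sq (by positivity)
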